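/- arXiv:2304.02479 — 3 statements merged into one kernel-verified Lean document; each statement's English description precedes it below -/
import Mathlib

section
/- Fix discrete time k and suppose the trader's value function satisfies the monotonicity property: q^k(l,1) = 0 implies q^k(λ,1) = 0 for all k ≤ l ≤ λ ≤ T. Let ℓ' = inf{k ≤ l ≤ T : q^k(l,1) = 0}. Then the trader's hedge ratios satisfy, for all k < ℓ ≤ T: a_k(ℓ) = 1{I_k=-1} + 1{I_k=1}(1{ℓ ≤ ℓ'} + 1{ℓ > ℓ'}·Q_k(i^k_{ℓ'}=-1)/P_k(ℓ)) and b_k(ℓ) = 1{I_k=1}·1{ℓ ≤ ℓ'}. -/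
open MeasureTheory

/-- Hedging ratios of the trader at time `k`. The trader's model chain `i` on `{1,-1}`
(with `-1` absorbing) starts at `i_k = Ik`; the optimal stopping time is
`θ = inf{l ≥ k : q(l, i_l) = 0 or l = T}`; `q(l,-1) = T - l` for `l < T`,
`q(T,·) = 0`, and `q(·,1)` satisfies the monotonicity property that once it vanishes it
stays zero. With `ℓ' = inf{k ≤ l ≤ T : q(l,1) = 0}`, the hedge ratios
`a(ℓ) = P(i_ℓ = -1, ℓ ≤ θ)/P(i_ℓ = -1)` and `b(ℓ) = P(i_ℓ = 1, ℓ ≤ θ)/P(i_ℓ = 1)`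
satisfy `a(ℓ) = 1{Ik=-1} + 1{Ik=1}(1{ℓ ≤ ℓ'} + 1{ℓ > ℓ'} P(i_{ℓ'} = -1)/P(i_ℓ = -1))`
and `b(ℓ) = 1{Ik=1} 1{ℓ ≤ ℓ'}`. -/
theorem stmt13 {Ω : Type*} [MeasurableSpace Ω] (μ : Measure Ω) [IsProbabilityMeasure μ]
    (T k : ℕ) (hkT : k ≤ T)
    (i : ℕ → Ω → ℤ) (himeas : ∀ l, Measurable (i l))
    (Ik : ℤ) (hIk : Ik = 1 ∨ Ik = -1) (hstart : ∀ ω, i k ω = Ik)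
    (hival : ∀ l ω, i l ω = 1 ∨ i l ω = -1)
    (habs : ∀ l ω, i l ω = -1 → i (l + 1) ω = -1)
    (q : ℕ → ℤ → ℝ)
    (hqm : ∀ l, k ≤ l → l < T → q l (-1) = (T : ℝ) - (l : ℝ))
    (hqT : q T 1 = 0 ∧ q T (-1) = 0)
    (hqmono : ∀ l lam, k ≤ l → l ≤ lam → lam ≤ T → q l 1 = 0 → q lam 1 = 0)
    (θ : Ω → ℕ)
    (hθ : ∀ ω, θ ω = sInf {l | k ≤ l ∧ (q l (i l ω) = 0 ∨ l = T)})
    (ℓ' : ℕ) (hℓ' : ℓ' = sInf {l | k ≤ l ∧ l ≤ T ∧ q l 1 = 0})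
    (hP : ∀ ℓ, k < ℓ → ℓ ≤ T → 0 < (μ {ω | i ℓ ω = -1}).toReal
      ∧ (Ik = 1 → (μ {ω | i ℓ ω = -1}).toReal < 1)) :
    ∀ ℓ, k < ℓ → ℓ ≤ T →
      (μ {ω | i ℓ ω = -1 ∧ ℓ ≤ θ ω}).toReal / (μ {ω | i ℓ ω = -1}).toReal
        = (if Ik = -1 then 1 else 0)
          + (if Ik = 1 then 1 else 0)
            * ((if ℓ ≤ ℓ' then 1 else 0)
              + (if ℓ' < ℓ then 1 else 0)
                * ((μ {ω | i ℓ' ω = -1}).toReal / (μ {ω | i ℓ ω = -1}).toReal))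
      ∧ (μ {ω | i ℓ ω = 1 ∧ ℓ ≤ θ ω}).toReal / (1 - (μ {ω | i ℓ ω = -1}).toReal)
        = (if Ik = 1 then 1 else 0) * (if ℓ ≤ ℓ' then 1 else 0) := by

  -- absorbing state propagates
  have habs' : ∀ ω m l, m ≤ l → i m ω = -1 → i l ω = -1 := by
    intro ω m l hml hm
    induction l, hml using Nat.le_induction with
    | base => exact hm
    | succ n hn ih => exact habs n ω ih
  have hstay1 : ∀ ω m l, m ≤ l → i l ω = 1 → i m ω = 1 := by
    intro ω m l h h1
    rcases hival m ω with h' | h'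
    · exact h'
    · have := habs' ω m l h h'
      rw [h1] at this; norm_num at this
  have hT1 : q T 1 = 0 := hqT.1
  have hℓ'mem : ℓ' ∈ {l | k ≤ l ∧ l ≤ T ∧ q l 1 = 0} := by
    rw [hℓ']; exact Nat.sInf_mem ⟨T, hkT, le_refl T, hT1⟩
  obtain ⟨hkℓ', hℓ'T, hqℓ'⟩ := hℓ'mem
  have hℓ'min : ∀ l, k ≤ l → l < ℓ' → q l 1 ≠ 0 := by
    intro l hkl hlℓ' h
    have hmem : l ∈ {l | k ≤ l ∧ l ≤ T ∧ q l 1 = 0} := ⟨hkl, by omega, h⟩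
    have := Nat.sInf_le hmem
    rw [← hℓ'] at this
    omega
  have hθmem : ∀ ω, θ ω ∈ {l | k ≤ l ∧ (q l (i l ω) = 0 ∨ l = T)} := by
    intro ω
    have := Nat.sInf_mem (⟨T, hkT, Or.inr rfl⟩ :
      Set.Nonempty {l | k ≤ l ∧ (q l (i l ω) = 0 ∨ l = T)})
    rw [← hθ ω] at this
    exact this
  have hθleT : ∀ ω, θ ω ≤ T := by
    intro ω; rw [hθ ω]; exact Nat.sInf_le ⟨hkT, Or.inr rfl⟩
  have hθ1 : ∀ ω, i ℓ' ω = 1 → θ ω = ℓ' := by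
    intro ω h1
    have hle : θ ω ≤ ℓ' := by
      rw [hθ ω]; exact Nat.sInf_le ⟨hkℓ', Or.inl (by rw [h1]; exact hqℓ')⟩
    obtain ⟨hk, hor⟩ := hθmem ω
    by_contra hne
    have hlt : θ ω < ℓ' := lt_of_le_of_ne hle hne
    have hiθ : i (θ ω) ω = 1 := hstay1 ω _ _ (le_of_lt hlt) h1
    rcases hor with h0 | hT'
    · rw [hiθ] at h0; exact hℓ'min _ hk hlt h0
    · omega
  have hθ2 : ∀ ω, i ℓ' ω = -1 → θ ω = T := by
    intro ω h1
    obtain ⟨hk, hor⟩ := hθmem ω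
    rcases hor with h0 | hT'
    · by_contra hne
      have hlt : θ ω < T := lt_of_le_of_ne (hθleT ω) hne
      rcases hival (θ ω) ω with h | h
      · have hθℓ' : θ ω < ℓ' := by
          by_contra hge
          push_neg at hge
          have := habs' ω ℓ' (θ ω) hge h1
          rw [h] at this; norm_num at this
        rw [h] at h0
        exact hℓ'min _ hk hθℓ' h0
      · rw [h, hqm _ hk hlt] at h0
        have hc : (θ ω : ℝ) < (T : ℝ) := by exact_mod_cast hlt
        linarith
    · exact hT'
  have hmeas : ∀ l, MeasurableSet {ω | i l ω = -1} := by
    intro l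
    have := (himeas l) (measurableSet_singleton (-1 : ℤ))
    simpa [Set.preimage, Set.mem_singleton_iff] using this
  intro ℓ hkℓ hℓT
  obtain ⟨hPpos, hPlt⟩ := hP ℓ hkℓ hℓT
  rcases hIk with h1 | hm1
  · -- Ik = 1
    constructor
    · by_cases hle : ℓ ≤ ℓ'
      · have hset : {ω | i ℓ ω = -1 ∧ ℓ ≤ θ ω} = {ω | i ℓ ω = -1} := by
          ext ω
          simp only [Set.mem_setOf_eq, and_iff_left_iff_imp]
          intro h
          have h' : i ℓ' ω = -1 := habs' ω ℓ ℓ' hle h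
          rw [hθ2 ω h']; exact hℓT
        rw [hset, div_self (ne_of_gt hPpos)]
        have hnlt : ¬ ℓ' < ℓ := by omega
        norm_num [h1, hle, hnlt]
      · push_neg at hle
        have hset : {ω | i ℓ ω = -1 ∧ ℓ ≤ θ ω} = {ω | i ℓ' ω = -1} := by
          ext ω
          simp only [Set.mem_setOf_eq]
          constructor
          · rintro ⟨hi, hθℓ⟩
            rcases hival ℓ' ω with h | h
            · exfalso; rw [hθ1 ω h] at hθℓ; omega
            · exact h
          · intro h
            exact ⟨habs' ω ℓ' ℓ (le_of_lt hle) h, by rw [hθ2 ω h]; exact hℓT⟩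
        rw [hset]
        have hnle : ¬ ℓ ≤ ℓ' := by omega
        norm_num [h1, hle, hnle]
    · -- b part
      have hcompl : {ω | i ℓ ω = 1} = {ω | i ℓ ω = -1}ᶜ := by
        ext ω
        simp only [Set.mem_setOf_eq, Set.mem_compl_iff]
        rcases hival ℓ ω with h | h <;> norm_num [h]
      by_cases hle : ℓ ≤ ℓ'
      · have hset : {ω | i ℓ ω = 1 ∧ ℓ ≤ θ ω} = {ω | i ℓ ω = 1} := by
          ext ω
          simp only [Set.mem_setOf_eq, and_iff_left_iff_imp]
          intro h
          rcases hival ℓ' ω with h' | h'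
          · rw [hθ1 ω h']; exact hle
          · rw [hθ2 ω h']; exact hℓT
        have hcval : (μ {ω | i ℓ ω = -1}ᶜ).toReal = 1 - (μ {ω | i ℓ ω = -1}).toReal := by
          rw [measure_compl (hmeas ℓ) (measure_ne_top μ _)]
          rw [measure_univ]
          rw [ENNReal.toReal_sub_of_le prob_le_one ENNReal.one_ne_top]
          simp
        rw [hset, hcompl, hcval, div_self]
        · norm_num [h1, hle]
        · have := hPlt h1; linarith
      · have hset : {ω | i ℓ ω = 1 ∧ ℓ ≤ θ ω} = ∅ := by
          ext ω
          simp only [Set.mem_setOf_eq, Set.mem_empty_iff_false, iff_false, not_and]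
          intro hi hθℓ
          have h' : i ℓ' ω = 1 := hstay1 ω ℓ' ℓ (by omega) hi
          rw [hθ1 ω h'] at hθℓ; omega
        rw [hset]
        norm_num [h1, hle]
  · -- Ik = -1
    have hall : ∀ ω, i ℓ ω = -1 := fun ω =>
      habs' ω k ℓ (le_of_lt hkℓ) (by rw [hstart ω, hm1])
    have hθT : ∀ ω, θ ω = T := fun ω =>
      hθ2 ω (habs' ω k ℓ' hkℓ' (by rw [hstart ω, hm1]))
    constructor
    · have hset : {ω | i ℓ ω = -1 ∧ ℓ ≤ θ ω} = Set.univ := by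
        ext ω; simp [hall ω, hθT ω, hℓT]
      have hset2 : {ω | i ℓ ω = -1} = Set.univ := by
        ext ω; simp [hall ω]
      rw [hset, hset2]
      norm_num [hm1]
    · have hset : {ω | i ℓ ω = 1 ∧ ℓ ≤ θ ω} = ∅ := by
        ext ω
        simp only [Set.mem_setOf_eq, Set.mem_empty_iff_false, iff_false, not_and]
        intro hi
        rw [hall ω] at hi; norm_num at hi
      rw [hset]
      norm_num [hm1]
end

section
/- In the not-so-bad trader setup, define the refined partition: Ω_{T+1,T+1} = {I_0=...=I_T=1}, Ω_{l,T+1} = {I_0=...=I_{l-1}=1, I_l=...=I_T=-1} for 1 ≤ l ≤ T, and Ω_{l,m} = {I_0=...=I_{l-1}=1, I_l=...=I_{m-1}=-1, I_m=1} for 1 ≤ l < m ≤ T. These events partition the sample space; Ω_{l,m} is F_m-measurable for m ≤ T; and the conditional probability P(Ω_{T+1,T+1} | F_k) restricted to Ω_{l,m} equals 1{k < l} ∏_{r=k+1}^{T} u_r. -/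
/-! On the path `I_0 = 1, I_1, …, I_T`, `l` is the first time with `I_l = -1` and `m` the first
later time with `I_m = 1` (`T + 1` when there is none); this pins down the unique `Ω_{l,m}`
containing a given outcome, and for `m ≤ T` the event `Ω_{l,m}` only involves `I_0, …, I_m`.

The no-flip event `{N_0, …, N_T all even}` is the `F_k`-event `{N_0, …, N_k all even}` intersected
with `{N_{j+1} - N_j even for k ≤ j < T}`. The latter depends only on increments after time `k`,
hence is independent of `F_k`, and a Poisson(`γ`) variable is even with probability
`e^{-γ} cosh γ = u`. So `P(Ω_{T+1,T+1} | F_k) = ∏ u_r · 1{N_0, …, N_k all even}`, and on `Ω_{l,m}`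
that indicator is `1{k < l}`. -/

open MeasureTheory ProbabilityTheory Real

/-- Refined partition events: `Ω_{l,m}` is the event that the regime process `I`
(with `I_0 = 1`) first flips to `-1` at time `l` and first flips back to `+1` at time `m`
(`m = T+1` meaning no return before maturity, `l = m = T+1` meaning no flip at all). -/
def OmegaN {Ω : Type*} (I : ℕ → Ω → ℤ) (T l m : ℕ) : Set Ω :=
  if l = T + 1 ∧ m = T + 1 then {ω | ∀ j ≤ T, I j ω = 1}
  else if m = T + 1 then
    {ω | (∀ j < l, I j ω = 1) ∧ ∀ j, l ≤ j → j ≤ T → I j ω = -1}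
  else
    {ω | (∀ j < l, I j ω = 1) ∧ (∀ j, l ≤ j → j < m → I j ω = -1) ∧ I m ω = 1}

/-- One-period stay probability. -/
noncomputable def uprob (γ : ℕ → ℝ) (m : ℕ) : ℝ := (1 + Real.exp (-2 * γ (m - 1))) / 2

open scoped Nat

lemma exp_neg_mul_cosh (c : ℝ) : exp (-c) * cosh c = (1 + exp (-2 * c)) / 2 := by
  rw [cosh_eq, mul_div_assoc', mul_add, ← exp_add, ← exp_add]
  ring_nf; simp

lemma measure_even_of_poisson {Ω : Type*} [MeasurableSpace Ω] {μ : Measure Ω} {X : Ω → ℕ}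
    (hX : Measurable X) {c : ℝ}
    (hP : ∀ j : ℕ, μ {ω | X ω = j} = ENNReal.ofReal (exp (-c) * c ^ j / j !)) :
    μ {ω | Even (X ω)} = ENNReal.ofReal ((1 + exp (-2 * c)) / 2) := by
  have hunion : {ω | Even (X ω)} = ⋃ n : ℕ, {ω | X ω = 2 * n} := by
    ext ω; simp [even_iff_two_dvd, dvd_def]
  have hdisj : Pairwise (Function.onFun Disjoint fun n : ℕ => {ω | X ω = 2 * n}) := fun a b hab =>
    Set.disjoint_left.2 fun ω ha hb => hab (by simp only [Set.mem_ofPred_eq] at ha hb; omega)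
  have hsum : HasSum (fun n : ℕ => exp (-c) * c ^ (2 * n) / (2 * n)!) (exp (-c) * cosh c) := by
    simpa only [mul_div_assoc] using (hasSum_cosh c).mul_left (exp (-c))
  rw [hunion, measure_iUnion hdisj fun n => hX (measurableSet_singleton _)]
  simp_rw [hP]
  rw [← ENNReal.ofReal_tsum_of_nonneg (fun n => by rw [pow_mul]; positivity) hsum.summable,
    hsum.tsum_eq, exp_neg_mul_cosh]

section Partition

variable {Ω : Type*} {I : ℕ → Ω → ℤ} {T : ℕ} {ω : Ω}

lemma mem_OmegaN_iff {l m : ℕ} (hm : m ≤ T + 1) :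
    ω ∈ OmegaN I T l m ↔
      (∀ j < l, I j ω = 1) ∧ (∀ j, l ≤ j → j < m → I j ω = -1) ∧ (m ≤ T → I m ω = 1) := by
  unfold OmegaN
  split_ifs <;> grind

def IsRefinedIndex (T : ℕ) (p : ℕ × ℕ) : Prop :=
  (1 ≤ p.1 ∧ p.1 < p.2 ∧ p.2 ≤ T + 1) ∨ p = (T + 1, T + 1)

lemma IsRefinedIndex.bounds {p : ℕ × ℕ} (h : IsRefinedIndex T p) :
    p.1 ≤ p.2 ∧ p.2 ≤ T + 1 ∧ (p.1 ≤ T → p.1 < p.2) := by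
  rcases h with h | rfl
  · omega
  · simp

lemma exists_mem_OmegaN (hI : ∀ j, I j ω = 1 ∨ I j ω = -1) (h0 : I 0 ω = 1) :
    ∃ p, IsRefinedIndex T p ∧ ω ∈ OmegaN I T p.1 p.2 := by
  have hl : ∃ j, j = T + 1 ∨ I j ω = -1 := ⟨T + 1, Or.inl rfl⟩
  set l := Nat.find hl
  have hm : ∃ j, j = T + 1 ∨ (l ≤ j ∧ I j ω = 1) := ⟨T + 1, Or.inl rfl⟩
  set m := Nat.find hm
  have hlT : l ≤ T + 1 := Nat.find_min' hl (Or.inl rfl)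
  have hmT : m ≤ T + 1 := Nat.find_min' hm (Or.inl rfl)
  have hl_spec : l = T + 1 ∨ I l ω = -1 := Nat.find_spec hl
  have hm_spec : m = T + 1 ∨ (l ≤ m ∧ I m ω = 1) := Nat.find_spec hm
  have h_before : ∀ j < l, I j ω = 1 := fun j hj =>
    (hI j).resolve_right fun h => Nat.find_min hl hj (Or.inr h)
  have h_between : ∀ j, l ≤ j → j < m → I j ω = -1 := fun j hlj hjm =>
    (hI j).resolve_left fun h => Nat.find_min hm hjm (Or.inr ⟨hlj, h⟩)
  have hl_pos : 1 ≤ l := Nat.one_le_iff_ne_zero.2 fun h => by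
    rw [h, h0] at hl_spec; omega
  refine ⟨(l, m), ?_, (mem_OmegaN_iff hmT).2 ⟨h_before, h_between, fun h => ?_⟩⟩
  · simp only [IsRefinedIndex, Prod.ext_iff]
    rcases hl_spec with hl' | hl' <;> rcases hm_spec with hm' | ⟨hlm, hm'⟩
    any_goals omega
    have : l ≠ m := fun h => by rw [h, hm'] at hl'; omega
    omega
  · exact (hm_spec.resolve_left (by omega)).2

lemma IsRefinedIndex.lex_le_of_mem_OmegaN {p q : ℕ × ℕ} (hp : IsRefinedIndex T p)
    (hq : IsRefinedIndex T q) (hωp : ω ∈ OmegaN I T p.1 p.2) (hωq : ω ∈ OmegaN I T q.1 q.2) :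
    p.1 ≤ q.1 ∧ (p.1 = q.1 → p.2 ≤ q.2) := by
  obtain ⟨hp_le, hpT, -⟩ := hp.bounds
  obtain ⟨hq_le, hqT, hq_lt⟩ := hq.bounds
  obtain ⟨h_before, h_between, -⟩ := (mem_OmegaN_iff hpT).1 hωp
  obtain ⟨-, h_between', h_end'⟩ := (mem_OmegaN_iff hqT).1 hωq
  constructor
  · by_contra! hlt
    have := h_before q.1 hlt
    rw [h_between' q.1 le_rfl (hq_lt (by omega))] at this
    omega
  · intro heq
    by_contra! hlt
    have := h_between q.2 (heq ▸ hq_le) hlt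
    rw [h_end' (by omega)] at this
    omega

theorem existsUnique_mem_OmegaN (hI : ∀ j, I j ω = 1 ∨ I j ω = -1) (h0 : I 0 ω = 1) :
    ∃! p : ℕ × ℕ, IsRefinedIndex T p ∧ ω ∈ OmegaN I T p.1 p.2 := by
  obtain ⟨p, hp, hωp⟩ := exists_mem_OmegaN hI h0
  refine ⟨p, ⟨hp, hωp⟩, fun q ⟨hq, hωq⟩ => ?_⟩
  have := hp.lex_le_of_mem_OmegaN hq hωp hωq
  have := hq.lex_le_of_mem_OmegaN hp hωq hωp
  exact Prod.ext (by omega) (by omega)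

end Partition

lemma measurableSet_OmegaN {Ω : Type*} {F : MeasurableSpace Ω} {I : ℕ → Ω → ℤ} {T l m : ℕ}
    (hlm : l ≤ m) (hmT : m ≤ T) (hI : ∀ j ≤ m, Measurable[F] (I j)) :
    MeasurableSet[F] (OmegaN I T l m) := by
  have hlevel : ∀ j ≤ m, ∀ c : ℤ, MeasurableSet[F] {ω | I j ω = c} :=
    fun j hj c => hI j hj (measurableSet_singleton c)
  have hset : OmegaN I T l m = (⋂ j ∈ Set.Iio l, {ω | I j ω = 1}) ∩
      (⋂ j ∈ Set.Ico l m, {ω | I j ω = -1}) ∩ {ω | I m ω = 1} := by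
    ext ω
    simp [mem_OmegaN_iff (show m ≤ T + 1 by omega), hmT, and_assoc]
  rw [hset]
  refine .inter (.inter ?_ ?_) (hlevel m le_rfl 1) <;>
    refine .biInter (Set.to_countable _) fun j hj => hlevel j ?_ _
  · exact (Set.mem_Iio.1 hj).le.trans hlm
  · exact (Set.mem_Ico.1 hj).2.le

lemma condExp_indicator_inter_ae_eq_of_indep {Ω : Type*} {m₁ m₂ mΩ : MeasurableSpace Ω}
    {μ : Measure Ω} [IsFiniteMeasure μ] (hle₁ : m₁ ≤ mΩ) (hle₂ : m₂ ≤ mΩ)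
    (hind : Indep m₁ m₂ μ) {B D : Set Ω} (hB : MeasurableSet[m₂] B) (hD : MeasurableSet[m₁] D) :
    μ[(B ∩ D).indicator (fun _ => (1 : ℝ)) | m₂] =ᵐ[μ] B.indicator (fun _ => μ.real D) := by
  have hDint : Integrable (D.indicator fun _ => (1 : ℝ)) μ :=
    (integrable_const 1).indicator (hle₁ _ hD)
  have hDconst : μ[D.indicator (fun _ => (1 : ℝ)) | m₂] =ᵐ[μ] fun _ => μ.real D := by
    refine (condExp_indep_eq hle₁ hle₂ (stronglyMeasurable_const.indicator hD) hind).trans ?_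
    simp [integral_indicator (hle₁ _ hD)]
  rw [← Set.indicator_indicator]
  filter_upwards [condExp_indicator hDint hB, hDconst] with ω h₁ h₂
  rw [h₁]
  by_cases hω : ω ∈ B <;> simp [hω, h₂]

section Increments

variable {Ω : Type*} {N : ℕ → Ω → ℕ}

def increments (N : ℕ → Ω → ℕ) (l : ℕ) (ω : Ω) : ℕ := N (l + 1) ω - N l ω

lemma measurable_increments [MeasurableSpace Ω] (hNmeas : ∀ k, Measurable (N k)) (l : ℕ) :
    Measurable (increments N l) :=
  (hNmeas (l + 1)).sub (hNmeas l)

lemma measurable_increments_iSup_comap {S : Set ℕ} {l : ℕ} (hl : l ∈ S) :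
    Measurable[⨆ i ∈ S, MeasurableSpace.comap (increments N i) inferInstance]
      (increments N l) :=
  Measurable.of_comap_le (le_iSup₂ (f := fun i (_ : i ∈ S) =>
    MeasurableSpace.comap (increments N i) inferInstance) l hl)

lemma sum_range_increments (hN0 : ∀ ω, N 0 ω = 0) (hNmono : ∀ k ω, N k ω ≤ N (k + 1) ω)
    (j : ℕ) (ω : Ω) : ∑ i ∈ Finset.range j, increments N i ω = N j ω := by
  simp only [increments]
  rw [Finset.sum_range_tsub (monotone_nat_of_le_succ fun k => hNmono k ω), hN0, Nat.sub_zero]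

lemma natural_le_iSup_comap_increments [MeasurableSpace Ω] (hNmeas : ∀ k, Measurable (N k))
    (hN0 : ∀ ω, N 0 ω = 0) (hNmono : ∀ k ω, N k ω ≤ N (k + 1) ω) (k : ℕ) :
    Filtration.natural N (fun k => (hNmeas k).stronglyMeasurable) k ≤
      ⨆ i ∈ Set.Iio k, MeasurableSpace.comap (increments N i) inferInstance := by
  refine iSup₂_le fun j hj => Measurable.comap_le ?_
  have hsum : N j = fun ω => ∑ i ∈ Finset.range j, increments N i ω :=
    funext fun ω => (sum_range_increments hN0 hNmono j ω).symm
  rw [hsum]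
  exact Finset.measurable_sum _ fun i hi =>
    measurable_increments_iSup_comap (Set.mem_Iio.2 ((Finset.mem_range.1 hi).trans_le hj))

lemma forall_even_iff_forall_even_increments (hNmono : ∀ k ω, N k ω ≤ N (k + 1) ω)
    {k T : ℕ} (hkT : k ≤ T) (ω : Ω) :
    (∀ j ≤ T, Even (N j ω)) ↔
      (∀ j ≤ k, Even (N j ω)) ∧ ∀ j ∈ Finset.Ico k T, Even (increments N j ω) := by
  refine ⟨fun h => ⟨fun j hj => h j (hj.trans hkT), fun j hj => ?_⟩, fun ⟨hk, hinc⟩ j hj => ?_⟩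
  · rw [Finset.mem_Ico] at hj
    exact (Nat.even_sub (hNmono j ω)).2 (iff_of_true (h _ hj.2) (h _ hj.2.le))
  · induction j with
    | zero => exact hk 0 k.zero_le
    | succ j ih =>
      rcases le_or_gt (j + 1) k with hjk | hkj
      · exact hk _ hjk
      · have hj_even := hinc j (Finset.mem_Ico.2 ⟨Nat.le_of_lt_succ hkj, hj⟩)
        exact ((Nat.even_sub (hNmono j ω)).1 hj_even).2 (ih (Nat.le_of_succ_le hj))

end Increments

section Poisson

variable {Ω : Type*} [MeasurableSpace Ω] {μ : Measure Ω} {N : ℕ → Ω → ℕ} {γ : ℕ → ℝ}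

lemma measure_biInter_even_increments (hNmeas : ∀ k, Measurable (N k))
    (hIndep : iIndepFun (increments N) μ)
    (hPois : ∀ l, ∀ j : ℕ, μ {ω | increments N l ω = j}
      = ENNReal.ofReal (exp (-γ l) * γ l ^ j / j !)) (k T : ℕ) :
    μ (⋂ j ∈ Finset.Ico k T, {ω | Even (increments N j ω)})
      = ENNReal.ofReal (∏ r ∈ Finset.Icc (k + 1) T, uprob γ r) := by
  rw [hIndep.meas_biInter (s := fun j => {ω | Even (increments N j ω)})
      fun j _ => ⟨{n | Even n}, .of_discrete, rfl⟩,
    Finset.prod_congr rfl fun j _ =>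
      measure_even_of_poisson (measurable_increments hNmeas j) (hPois j),
    ← ENNReal.ofReal_prod_of_nonneg fun j _ => by positivity,
    ← Finset.Ico_add_one_right_eq_Icc, ← Finset.prod_Ico_add' (uprob γ)]
  simp only [uprob, Nat.add_sub_cancel]

lemma indep_iSup_comap_increments_natural (hNmeas : ∀ k, Measurable (N k))
    (hN0 : ∀ ω, N 0 ω = 0) (hNmono : ∀ k ω, N k ω ≤ N (k + 1) ω)
    (hIndep : iIndepFun (increments N) μ) (k : ℕ) :
    Indep (⨆ i ∈ Set.Ici k, MeasurableSpace.comap (increments N i) inferInstance)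
      (Filtration.natural N (fun k => (hNmeas k).stronglyMeasurable) k) μ :=
  indep_of_indep_of_le_right
    (indep_iSup_of_disjoint (fun i => (measurable_increments hNmeas i).comap_le)
      hIndep.iIndep (Set.Iio_disjoint_Ici le_rfl)).symm
    (natural_le_iSup_comap_increments hNmeas hN0 hNmono k)

lemma condExp_indicator_forall_even_ae_eq [IsFiniteMeasure μ]
    (hNmeas : ∀ k, Measurable (N k)) (hN0 : ∀ ω, N 0 ω = 0)
    (hNmono : ∀ k ω, N k ω ≤ N (k + 1) ω) (hIndep : iIndepFun (increments N) μ)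
    (hPois : ∀ l, ∀ j : ℕ, μ {ω | increments N l ω = j}
      = ENNReal.ofReal (exp (-γ l) * γ l ^ j / j !)) {k T : ℕ} (hkT : k ≤ T) :
    μ[{ω | ∀ j ≤ T, Even (N j ω)}.indicator (fun _ => (1 : ℝ))
        | Filtration.natural N (fun k => (hNmeas k).stronglyMeasurable) k]
      =ᵐ[μ] {ω | ∀ j ≤ k, Even (N j ω)}.indicator
        (fun _ => ∏ r ∈ Finset.Icc (k + 1) T, uprob γ r) := by
  set F := Filtration.natural N fun k => (hNmeas k).stronglyMeasurable
  set D := ⋂ j ∈ Finset.Ico k T, {ω | Even (increments N j ω)}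
  have hD : MeasurableSet[⨆ i ∈ Set.Ici k, MeasurableSpace.comap (increments N i) inferInstance]
      D :=
    .biInter (Finset.countable_toSet _) fun j hj =>
      measurable_increments_iSup_comap (Finset.mem_Ico.1 hj).1 (.of_discrete (s := {n | Even n}))
  have hB : MeasurableSet[F k] {ω | ∀ j ≤ k, Even (N j ω)} := by
    have hset : {ω | ∀ j ≤ k, Even (N j ω)} = ⋂ j ∈ Set.Iic k, N j ⁻¹' {n | Even n} := by
      ext ω; simp
    rw [hset]
    exact .biInter (Set.to_countable _) fun j hj =>
      ((Filtration.stronglyAdapted_natural _ j).mono (F.mono hj)).measurable .of_discrete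
  have hsplit : {ω | ∀ j ≤ T, Even (N j ω)} = {ω | ∀ j ≤ k, Even (N j ω)} ∩ D := by
    ext ω
    simp [D, forall_even_iff_forall_even_increments hNmono hkT ω]
  have hμD : μ.real D = ∏ r ∈ Finset.Icc (k + 1) T, uprob γ r := by
    rw [measureReal_def, measure_biInter_even_increments hNmeas hIndep hPois,
      ENNReal.toReal_ofReal (Finset.prod_nonneg fun r _ => by unfold uprob; positivity)]
  rw [hsplit, ← hμD]
  exact condExp_indicator_inter_ae_eq_of_indep
    (iSup₂_le fun i _ => (measurable_increments hNmeas i).comap_le) (F.le k)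
    (indep_iSup_comap_increments_natural hNmeas hN0 hNmono hIndep k) hB hD

end Poisson

theorem stmt16_general {Ω : Type*} {m : MeasurableSpace Ω} (μ : Measure Ω) [IsProbabilityMeasure μ]
    (T : ℕ) (γ : ℕ → ℝ)
    (N : ℕ → Ω → ℕ) (hNmeas : ∀ k, Measurable (N k))
    (hN0 : ∀ ω, N 0 ω = 0) (hNmono : ∀ k ω, N k ω ≤ N (k + 1) ω)
    (hIndep : iIndepFun (m := fun _ : ℕ => (inferInstance : MeasurableSpace ℕ))
      (fun l ω => N (l + 1) ω - N l ω) μ)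
    (hPois : ∀ l, ∀ j : ℕ, μ {ω | N (l + 1) ω - N l ω = j}
      = ENNReal.ofReal (Real.exp (-γ l) * γ l ^ j / (Nat.factorial j)))
    (I : ℕ → Ω → ℤ) (hI : ∀ k ω, I k ω = (-1) ^ (N k ω)) :
    (∀ ω, ∃! p : ℕ × ℕ,
      ((1 ≤ p.1 ∧ p.1 < p.2 ∧ p.2 ≤ T + 1) ∨ p = (T + 1, T + 1))
      ∧ ω ∈ OmegaN I T p.1 p.2)
    ∧ (∀ l mm, 1 ≤ l → l < mm → mm ≤ T →
        MeasurableSet[(Filtration.natural N fun k => (hNmeas k).stronglyMeasurable) mm]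
          (OmegaN I T l mm))
    ∧ (∀ k, k ≤ T → ∀ l mm,
        ((1 ≤ l ∧ l < mm ∧ mm ≤ T + 1) ∨ (l = T + 1 ∧ mm = T + 1)) →
        ∀ᵐ ω ∂μ, ω ∈ OmegaN I T l mm →
          (μ[(OmegaN I T (T + 1) (T + 1)).indicator (fun _ => (1 : ℝ))
              | ((Filtration.natural N fun k => (hNmeas k).stronglyMeasurable) k)]) ω
            = (if k < l then ∏ r ∈ Finset.Icc (k + 1) T, uprob γ r else 0)) := by
  have hI_one : ∀ j ω, I j ω = 1 ↔ Even (N j ω) := fun j ω => by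
    rw [hI]; exact neg_one_pow_eq_one_iff_even (by decide)
  have hI_sign : ∀ j ω, I j ω = 1 ∨ I j ω = -1 := fun j ω => hI j ω ▸ neg_one_pow_eq_or ℤ _
  have hnoflip : OmegaN I T (T + 1) (T + 1) = {ω | ∀ j ≤ T, Even (N j ω)} := by
    ext ω; simp [OmegaN, hI_one]
  refine ⟨fun ω => existsUnique_mem_OmegaN (hI_sign · ω) ((hI_one 0 ω).2 (by simp [hN0])),
    fun l mm _ hlm hmT => measurableSet_OmegaN hlm.le hmT fun j hj => ?_,
    fun k hkT l mm hidx => ?_⟩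
  · rw [funext (hI j)]
    exact measurable_from_top.comp
      ((Filtration.stronglyAdapted_natural (fun k => (hNmeas k).stronglyMeasurable) j).mono
        (Filtration.mono _ hj)).measurable
  · have hmT : mm ≤ T + 1 := by omega
    filter_upwards [condExp_indicator_forall_even_ae_eq hNmeas hN0 hNmono hIndep hPois hkT]
      with ω hω hmem
    obtain ⟨h_before, h_between, -⟩ := (mem_OmegaN_iff hmT).1 hmem
    rw [hnoflip, hω]
    split_ifs with hkl
    · rw [Set.indicator_of_mem]
      exact fun j hj => (hI_one j ω).1 (h_before j (by omega))
    · refine Set.indicator_of_notMem (fun hB => ?_) _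
      have := (hI_one l ω).2 (hB l (by omega))
      rw [h_between l le_rfl (by omega)] at this
      omega

/-- For `I_k = (-1)^{N_k}` with `N` having independent Poisson(γ_l) increments: the events
`Ω_{l,m}`, `(l,m) ∈ 𝓘`, partition the sample space; `Ω_{l,m}` is `F_m`-measurable for
`m ≤ T`; and the conditional probability `P(Ω_{T+1,T+1} | F_k)` restricted to `Ω_{l,m}`
equals `1{k < l} ∏_{r=k+1}^{T} u_r`. -/
theorem stmt16 {Ω : Type*} {m : MeasurableSpace Ω} (μ : Measure Ω) [IsProbabilityMeasure μ]
    (T : ℕ) (γ : ℕ → ℝ) (hγ : ∀ l, 0 ≤ γ l)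
    (N : ℕ → Ω → ℕ) (hNmeas : ∀ k, Measurable (N k))
    (hN0 : ∀ ω, N 0 ω = 0) (hNmono : ∀ k ω, N k ω ≤ N (k + 1) ω)
    (hIndep : iIndepFun (m := fun _ : ℕ => (inferInstance : MeasurableSpace ℕ))
      (fun l ω => N (l + 1) ω - N l ω) μ)
    (hPois : ∀ l, ∀ j : ℕ, μ {ω | N (l + 1) ω - N l ω = j}
      = ENNReal.ofReal (Real.exp (-γ l) * γ l ^ j / (Nat.factorial j)))
    (I : ℕ → Ω → ℤ) (hI : ∀ k ω, I k ω = (-1) ^ (N k ω)) :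
    (∀ ω, ∃! p : ℕ × ℕ,
      ((1 ≤ p.1 ∧ p.1 < p.2 ∧ p.2 ≤ T + 1) ∨ p = (T + 1, T + 1))
      ∧ ω ∈ OmegaN I T p.1 p.2)
    ∧ (∀ l mm, 1 ≤ l → l < mm → mm ≤ T →
        MeasurableSet[(Filtration.natural N fun k => (hNmeas k).stronglyMeasurable) mm]
          (OmegaN I T l mm))
    ∧ (∀ k, k ≤ T → ∀ l mm,
        ((1 ≤ l ∧ l < mm ∧ mm ≤ T + 1) ∨ (l = T + 1 ∧ mm = T + 1)) →
        ∀ᵐ ω ∂μ, ω ∈ OmegaN I T l mm →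
          (μ[(OmegaN I T (T + 1) (T + 1)).indicator (fun _ => (1 : ℝ))
              | ((Filtration.natural N fun k => (hNmeas k).stronglyMeasurable) k)]) ω
            = (if k < l then ∏ r ∈ Finset.Icc (k + 1) T, uprob γ r else 0)) :=
  stmt16_general μ T γ N hNmeas hN0 hNmono hIndep hPois I hI
end

section
/- For the not-so-bad trader: on the event Ω_{l,m} with m ≤ T, under the assumption Q(k,1) = 0 for all k, the exit time satisfies τ_e ≤ m; moreover τ_e(Ω_{l,m}) = θ*(Ω_{l,m}) 1{θ*(Ω_{l,m}) < l ∧ T} + 1{θ*(Ω_{l,m}) ≥ l ∧ T}(m ∧ T), where θ*(Ω_{l,m}) = inf{k < l : q^k(k,1) = 0} ∧ l ∧ T. -/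

lemma sInf_eq_of' {S : Set ℕ} {m : ℕ} (hm : m ∈ S) (hlt : ∀ k < m, k ∉ S) :
    sInf S = m := by
  refine le_antisymm (Nat.sInf_le hm) ?_
  by_contra h
  push_neg at h
  exact hlt _ h (Nat.sInf_mem ⟨m, hm⟩)

/-- For the not-so-bad trader, under the assumption `Q(·,1) ≡ 0` (and `Q(k,-1) > 0` for
`k < T`): on the event `Ω_{l,m}` with `m ≤ T` the exit time satisfies `τ_e ≤ m` and
`τ_e = θ* 1{θ* < l ∧ T} + 1{θ* ≥ l ∧ T} (m ∧ T)`, where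
`θ*(Ω_{l,m}) = inf{k < l : q^k(k,1) = 0} ∧ l ∧ T` (here `qd k` is the deterministic
value `q^k(k,1)`). -/
theorem stmt18 {Ω : Type*} (T : ℕ)
    (I : ℕ → Ω → ℤ) (hI0 : ∀ ω, I 0 ω = 1) (hIval : ∀ k ω, I k ω = 1 ∨ I k ω = -1)
    (Q : ℕ → ℤ → ℝ) (hQ1 : ∀ k, Q k 1 = 0) (hQm : ∀ k < T, 0 < Q k (-1))
    (hQT : Q T (-1) = 0)
    (qd : ℕ → ℝ)
    (τs θstar τe : Ω → ℕ)
    (hτs : ∀ ω, τs ω = sInf ({k | I k ω = -1} ∪ {T}))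
    (hθ : ∀ ω, θstar ω = sInf ({k | k < τs ω ∧ qd k = 0} ∪ {τs ω}))
    (hτe : ∀ ω, τe ω = if θstar ω < τs ω then θstar ω
      else sInf ({k | τs ω ≤ k ∧ Q k (I k ω) = 0} ∪ {T})) :
    ∀ l m, 1 ≤ l → l < m → m ≤ T →
      ∀ ω ∈ OmegaN I T l m,
        τe ω ≤ m
        ∧ τe ω = (if sInf ({k | k < l ∧ qd k = 0} ∪ {min l T}) < min l T
            then sInf ({k | k < l ∧ qd k = 0} ∪ {min l T})
            else min m T) := by
  intro l m hl hlm hmT ω hω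
  have hlT : l < T := lt_of_lt_of_le hlm hmT
  have hmm : ¬ (l = T + 1 ∧ m = T + 1) := by omega
  have hmm2 : ¬ (m = T + 1) := by omega
  rw [OmegaN, if_neg hmm, if_neg hmm2] at hω
  obtain ⟨h1, h2, h3⟩ := hω
  -- τs ω = l
  have hτsl : τs ω = l := by
    rw [hτs]
    apply sInf_eq_of'
    · exact Or.inl (h2 l le_rfl hlm)
    · intro k hk hkS
      rcases hkS with hkS | hkS
      · simp only [Set.mem_setOf_eq, h1 k hk] at hkS; norm_num at hkS
      · simp only [Set.mem_singleton_iff] at hkS; omega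
  have hminl : min l T = l := min_eq_left hlT.le
  have hminm : min m T = m := min_eq_left hmT
  have hθω : θstar ω = sInf ({k | k < l ∧ qd k = 0} ∪ {min l T}) := by
    rw [hθ, hτsl, hminl]
  by_cases hcase : θstar ω < l
  · have : τe ω = θstar ω := by rw [hτe, hτsl, if_pos hcase]
    rw [this, hθω, if_pos (by rw [← hθω, hminl]; exact hcase)]
    exact ⟨by omega, rfl⟩
  · have hτem : τe ω = m := by
      rw [hτe, hτsl, if_neg hcase]
      apply sInf_eq_of'
      · exact Or.inl ⟨hlm.le, by rw [h3, hQ1]⟩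
      · intro k hk hkS
        rcases hkS with ⟨hlk, hQk⟩ | hkS
        · rw [h2 k hlk hk] at hQk
          exact absurd hQk (ne_of_gt (hQm k (lt_of_lt_of_le hk hmT)))
        · simp only [Set.mem_singleton_iff] at hkS; omega
    rw [hτem, if_neg (by rw [← hθω, hminl]; exact hcase), hminm]
    exact ⟨le_rfl, rfl⟩
end
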